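/- arXiv:1808.04329 — 5 statements merged into one kernel-verified Lean document; each statement's English description precedes it below -/
import Mathlib

section
/- Let T be an ℕ-valued random variable with E T < ∞ and P(T ≥ j) > 0 for all j ∈ ℕ. Define transition probabilities on ℕ by p_{j,0} = P(T = j)/P(T ≥ j), p_{j,j+1} = P(T ≥ j+1)/P(T ≥ j), and p_{j,k} = 0 otherwise, with stationary distribution π(j) = P(T ≥ j)/(1 + E T), and transition operator Pf(j) = (P(T = j)/P(T ≥ j))·f(0) + (P(T ≥ j+1)/P(T ≥ j))·f(j+1). If 3·E T < P(T = 0) and P(T ≥ 1) ≥ sup_{k ≥ 1} P(T ≥ k+1)/P(T ≥ k), then for every f ∈ L²(π) with Σ_j f(j) π(j) = 0 and Σ_j f(j)² π(j) ≤ 1, one has Σ_j |Pf(j)|² π(j) ≤ 3·E T + P(T ≥ 1) = 1 − (P(T = 0) − 3·E T) < 1; in particular the Markov chain has the L²-spectral gap property. -/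
/-!
Write `π j = G j / (1 + ET)`, so that state `j` jumps to `0` with probability
`1 - G (j + 1) / G j` and to `j + 1` with probability `G (j + 1) / G j ≤ G 1`.
Expanding the square pointwise and using `∑ j, (G j - G (j + 1)) = G 0 = 1` gives
`∑ (Pf j)² π j ≤ f 0² π 0 + 2 |f 0| A + G 1 · B`, where `A = ∑_{k ≥ 1} |f k| π k` and
`B = ∑_{k ≥ 1} f k² π k ≤ 1`. The mean-zero condition gives `|f 0| π 0 ≤ A`, and Cauchy–Schwarz
together with the tail-sum bound `∑_{k ≥ 1} G k ≤ ET` gives `A² ≤ ET π 0`; hence both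
`|f 0| A` and `f 0² π 0` are at most `ET`.
-/

open MeasureTheory

theorem sq_mul_add_mul_div_le {a b g c x y : ℝ} (hg : 0 < g) (ha : 0 ≤ a) (hag : a ≤ g)
    (hb : 0 ≤ b) (hbg : b ≤ c * g) :
    (a / g * x + b / g * y) ^ 2 * g ≤ a * x ^ 2 + 2 * b * (|x| * |y|) + c * b * y ^ 2 := by
  have hxy : x * y ≤ |x| * |y| := by rw [← abs_mul]; exact le_abs_self _
  have h1 : a * (a * x ^ 2) ≤ g * (a * x ^ 2) := by gcongr
  have h2 : a * (b * (x * y)) ≤ g * (b * (|x| * |y|)) :=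
    calc a * (b * (x * y)) ≤ a * (b * (|x| * |y|)) := by gcongr
      _ ≤ g * (b * (|x| * |y|)) := by gcongr
  have h3 : b * (b * y ^ 2) ≤ c * g * (b * y ^ 2) := by gcongr
  rw [show (a / g * x + b / g * y) ^ 2 * g = (a * x + b * y) ^ 2 / g by field_simp,
    div_le_iff₀ hg]
  calc (a * x + b * y) ^ 2 = a * (a * x ^ 2) + 2 * (a * (b * (x * y))) + b * (b * y ^ 2) := by
        ring
    _ ≤ g * (a * x ^ 2) + 2 * (g * (b * (|x| * |y|))) + c * g * (b * y ^ 2) := by linarith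
    _ = (a * x ^ 2 + 2 * b * (|x| * |y|) + c * b * y ^ 2) * g := by ring

theorem abs_le_tsum_abs_succ_of_tsum_eq_zero {g : ℕ → ℝ} (hg : Summable g)
    (h0 : ∑' k, g k = 0) : |g 0| ≤ ∑' k, |g (k + 1)| := by
  have hsucc : Summable fun k => g (k + 1) := (summable_nat_add_iff 1).2 hg
  rw [hg.tsum_eq_zero_add, add_eq_zero_iff_eq_neg] at h0
  rw [h0, abs_neg]
  exact norm_tsum_le_tsum_norm hsucc.norm

theorem tsum_sub_succ {G : ℕ → ℝ} (hG : Summable G) : ∑' j, (G j - G (j + 1)) = G 0 := by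
  rw [hG.tsum_sub ((summable_nat_add_iff 1).2 hG), hG.tsum_eq_zero_add, add_sub_cancel_right]

theorem summable_abs_mul_of_summable_sq_mul {ι : Type*} {a w : ι → ℝ} (hw : ∀ i, 0 ≤ w i)
    (ha : Summable fun i => a i ^ 2 * w i) (hws : Summable w) :
    Summable fun i => |a i| * w i :=
  (ha.add hws).of_nonneg_of_le (fun i => mul_nonneg (abs_nonneg _) (hw i)) fun i => by
    have : |a i| ≤ a i ^ 2 + 1 := by nlinarith [sq_abs (a i), sq_nonneg (|a i| - 1)]
    nlinarith [mul_le_mul_of_nonneg_right this (hw i)]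

theorem sq_tsum_abs_mul_le {ι : Type*} {a w : ι → ℝ} (hw : ∀ i, 0 ≤ w i)
    (ha : Summable fun i => a i ^ 2 * w i) (hws : Summable w) :
    (∑' i, |a i| * w i) ^ 2 ≤ (∑' i, a i ^ 2 * w i) * ∑' i, w i := by
  have hX : 0 ≤ ∑' i, a i ^ 2 * w i := tsum_nonneg fun i => mul_nonneg (sq_nonneg _) (hw i)
  have hY : 0 ≤ ∑' i, w i := tsum_nonneg hw
  obtain ⟨C, hC0, hCle, hC⟩ := Real.inner_le_Lp_mul_Lq_hasSum_of_nonneg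
    Real.HolderConjugate.two_two (Real.sqrt_nonneg _) (Real.sqrt_nonneg _)
    (f := fun i => |a i| * √(w i)) (g := fun i => √(w i))
    (A := √(∑' i, a i ^ 2 * w i)) (B := √(∑' i, w i))
    (fun i => by positivity) (fun i => Real.sqrt_nonneg _)
    (by simpa [Real.rpow_two, mul_pow, Real.sq_sqrt (hw _), Real.sq_sqrt hX] using ha.hasSum)
    (by simpa [Real.rpow_two, Real.sq_sqrt (hw _), Real.sq_sqrt hY] using hws.hasSum)
  simp only [mul_assoc, Real.mul_self_sqrt (hw _)] at hC
  rw [hC.tsum_eq, ← Real.sq_sqrt hX, ← Real.sq_sqrt hY, ← mul_pow]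
  exact pow_le_pow_left₀ hC0 hCle 2

section TailProbabilities

variable {Ω : Type*} [MeasurableSpace Ω] {μ : Measure Ω} [IsFiniteMeasure μ] {T : Ω → ℕ}

theorem measureReal_eq_eq_sub (hT : Measurable T) (j : ℕ) :
    μ.real {ω | T ω = j} = μ.real {ω | j ≤ T ω} - μ.real {ω | j + 1 ≤ T ω} := by
  rw [← measureReal_sdiff (s₁ := {ω | j ≤ T ω}) (s₂ := {ω | j + 1 ≤ T ω})
    (fun ω (h : j + 1 ≤ T ω) => by simp only [Set.mem_ofPred_eq]; omega) (hT measurableSet_Ici)]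
  congr 1
  ext ω
  simp only [Set.mem_ofPred_eq, Set.mem_sdiff, not_le]
  omega

theorem sum_range_measureReal_le_integral (hT : Measurable T)
    (hTint : Integrable (fun ω => (T ω : ℝ)) μ) (n : ℕ) :
    ∑ k ∈ Finset.range n, μ.real {ω | k + 1 ≤ T ω} ≤ ∫ ω, (T ω : ℝ) ∂μ := by
  have hint : ∀ k : ℕ, Integrable ({ω | k + 1 ≤ T ω}.indicator (1 : Ω → ℝ)) μ :=
    fun k => (integrable_const 1).indicator (hT measurableSet_Ici)
  calc ∑ k ∈ Finset.range n, μ.real {ω | k + 1 ≤ T ω}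
      = ∑ k ∈ Finset.range n, ∫ ω, {ω | k + 1 ≤ T ω}.indicator 1 ω ∂μ :=
        Finset.sum_congr rfl fun k _ => (integral_indicator_one (hT measurableSet_Ici)).symm
    _ = ∫ ω, ∑ k ∈ Finset.range n, {ω | k + 1 ≤ T ω}.indicator (1 : Ω → ℝ) ω ∂μ :=
        (integral_finsetSum _ fun k _ => hint k).symm
    _ ≤ ∫ ω, (T ω : ℝ) ∂μ := by
        refine integral_mono (integrable_finsetSum _ fun k _ => hint k) hTint fun ω => ?_
        simp only [Set.indicator_apply, Set.mem_ofPred_eq, Pi.one_apply, Finset.sum_boole]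
        exact_mod_cast (Finset.card_le_card fun k hk => by
          simp only [Finset.mem_filter, Finset.mem_range] at hk ⊢; omega).trans
          (Finset.card_range _).le

end TailProbabilities

section TailChain

variable {G f : ℕ → ℝ}

theorem tsum_sq_transition_le {c : ℝ} (hc : 0 < c) (hGpos : ∀ j, 0 < G j)
    (hGanti : ∀ j, G (j + 1) ≤ G j) (hGsum : Summable G) (hratio : ∀ j, G (j + 1) ≤ G 1 * G j)
    (hf2 : Summable fun j => f j ^ 2 * (G j / c)) :
    ∑' j, ((G j - G (j + 1)) / G j * f 0 + G (j + 1) / G j * f (j + 1)) ^ 2 * (G j / c)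
      ≤ f 0 ^ 2 * (G 0 / c) + 2 * |f 0| * ∑' k, |f (k + 1)| * (G (k + 1) / c)
        + G 1 * ∑' k, f (k + 1) ^ 2 * (G (k + 1) / c) := by
  have hw : ∀ j, 0 ≤ G j / c := fun j => (div_pos (hGpos j) hc).le
  have hwsum : Summable fun j => G j / c := hGsum.div_const c
  have hu : Summable fun j => f 0 ^ 2 * ((G j - G (j + 1)) / c) :=
    ((hGsum.sub ((summable_nat_add_iff 1).2 hGsum)).div_const c).mul_left _
  have hv : Summable fun k => 2 * |f 0| * (|f (k + 1)| * (G (k + 1) / c)) :=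
    ((summable_nat_add_iff 1).2 (summable_abs_mul_of_summable_sq_mul hw hf2 hwsum)).mul_left _
  have hz : Summable fun k => G 1 * (f (k + 1) ^ 2 * (G (k + 1) / c)) :=
    ((summable_nat_add_iff 1).2 hf2).mul_left _
  have hpt : ∀ j, ((G j - G (j + 1)) / G j * f 0 + G (j + 1) / G j * f (j + 1)) ^ 2 * (G j / c)
      ≤ f 0 ^ 2 * ((G j - G (j + 1)) / c) + 2 * |f 0| * (|f (j + 1)| * (G (j + 1) / c))
        + G 1 * (f (j + 1) ^ 2 * (G (j + 1) / c)) := fun j => by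
    have := sq_mul_add_mul_div_le (x := f 0) (y := f (j + 1)) (hGpos j)
      (sub_nonneg.2 (hGanti j)) (sub_le_self _ (hGpos (j + 1)).le) (hGpos (j + 1)).le (hratio j)
    rw [← mul_div_assoc, div_le_iff₀ hc]
    exact this.trans_eq (by field_simp)
  have hM := (hu.add hv).add hz
  calc _ ≤ ∑' j, (f 0 ^ 2 * ((G j - G (j + 1)) / c)
          + 2 * |f 0| * (|f (j + 1)| * (G (j + 1) / c)) + G 1 * (f (j + 1) ^ 2 * (G (j + 1) / c))) :=
        (hM.of_nonneg_of_le (fun j => mul_nonneg (sq_nonneg _) (hw j)) hpt).tsum_le_tsum hpt hM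
    _ = _ := by
        rw [(hu.add hv).tsum_add hz, hu.tsum_add hv, tsum_mul_left, tsum_mul_left, tsum_mul_left,
          tsum_div_const, tsum_sub_succ hGsum]

theorem tsum_sq_transition_le_three_mul_add {E : ℝ} (hGpos : ∀ j, 0 < G j) (hG0 : G 0 = 1)
    (hGanti : ∀ j, G (j + 1) ≤ G j) (htail : ∀ n, ∑ k ∈ Finset.range n, G (k + 1) ≤ E)
    (hratio : ∀ k, 1 ≤ k → G (k + 1) / G k ≤ G 1)
    (hf2 : Summable fun j => f j ^ 2 * (G j / (1 + E)))
    (hmean : ∑' j, f j * (G j / (1 + E)) = 0) (hnorm : ∑' j, f j ^ 2 * (G j / (1 + E)) ≤ 1) :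
    ∑' j, ((G j - G (j + 1)) / G j * f 0 + G (j + 1) / G j * f (j + 1)) ^ 2 * (G j / (1 + E))
      ≤ 3 * E + G 1 := by
  have hE : G 1 ≤ E := by simpa using htail 1
  have hc : 0 < 1 + E := by linarith [hGpos 1]
  have hw : ∀ j, 0 ≤ G j / (1 + E) := fun j => (div_pos (hGpos j) hc).le
  have hGsum : Summable G :=
    (summable_nat_add_iff 1).1 (summable_of_sum_range_le (fun k => (hGpos _).le) htail)
  have hwsum : Summable fun j => G j / (1 + E) := hGsum.div_const _
  have hratio' : ∀ j, G (j + 1) ≤ G 1 * G j := by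
    rintro (_ | k)
    · simp [hG0]
    · exact (div_le_iff₀ (hGpos _)).1 (hratio (k + 1) k.succ_pos)
  set A := ∑' k, |f (k + 1)| * (G (k + 1) / (1 + E))
  set B := ∑' k, f (k + 1) ^ 2 * (G (k + 1) / (1 + E))
  have hB : B ≤ 1 := by
    rw [hf2.tsum_eq_zero_add] at hnorm
    linarith [mul_nonneg (sq_nonneg (f 0)) (hw 0)]
  have hf0 : |f 0| / (1 + E) ≤ A := by
    have habs := summable_abs_mul_of_summable_sq_mul hw hf2 hwsum
    have := abs_le_tsum_abs_succ_of_tsum_eq_zero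
      (summable_abs_iff.1 (by simpa only [abs_mul, abs_of_nonneg (hw _)] using habs)) hmean
    simpa only [abs_mul, abs_of_nonneg (hw _), hG0, mul_one_div, abs_div, abs_of_pos hc] using this
  have hA2 : A ^ 2 ≤ E / (1 + E) :=
    calc A ^ 2 ≤ B * ∑' k, G (k + 1) / (1 + E) :=
          sq_tsum_abs_mul_le (fun k => hw _) ((summable_nat_add_iff 1).2 hf2)
            ((summable_nat_add_iff 1).2 hwsum)
      _ ≤ ∑' k, G (k + 1) / (1 + E) := mul_le_of_le_one_left (tsum_nonneg fun k => hw _) hB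
      _ ≤ E / (1 + E) := by
          rw [tsum_div_const]
          gcongr
          exact Real.tsum_le_of_sum_range_le (fun k => (hGpos _).le) htail
  have hf0A : |f 0| * A ≤ E := by
    refine (div_le_div_iff_of_pos_right hc).1 ?_
    calc |f 0| * A / (1 + E) = |f 0| / (1 + E) * A := by ring
      _ ≤ A * A :=
          mul_le_mul_of_nonneg_right hf0 (tsum_nonneg fun k => mul_nonneg (abs_nonneg _) (hw _))
      _ = A ^ 2 := (sq A).symm
      _ ≤ E / (1 + E) := hA2
  have hf0sq : f 0 ^ 2 * (G 0 / (1 + E)) ≤ |f 0| * A := by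
    calc f 0 ^ 2 * (G 0 / (1 + E)) = |f 0| * (|f 0| / (1 + E)) := by
          rw [hG0, ← sq_abs]; ring
      _ ≤ |f 0| * A := by gcongr
  calc _ ≤ f 0 ^ 2 * (G 0 / (1 + E)) + 2 * |f 0| * A + G 1 * B :=
        tsum_sq_transition_le hc hGpos hGanti hGsum hratio' hf2
    _ ≤ 3 * E + G 1 := by linarith [mul_le_of_le_one_right (hGpos 1).le hB]

end TailChain

/-- **Lemma (spectral gap for the backward-recurrence-type chain).** Let `T` be an
`ℕ`-valued random variable with `E T < ∞` and `P(T ≥ j) > 0` for all `j`, and consider the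
Markov chain on `ℕ` with `p_{j,0} = P(T=j)/P(T≥j)`, `p_{j,j+1} = P(T≥j+1)/P(T≥j)`,
stationary distribution `π(j) = P(T≥j)/(1+ET)` and transition operator
`Pf(j) = (P(T=j)/P(T≥j)) f(0) + (P(T≥j+1)/P(T≥j)) f(j+1)`. If `3 ET < P(T=0)` and
`P(T≥1) ≥ sup_{k≥1} P(T≥k+1)/P(T≥k)`, then for every `f ∈ L²(π)` with `Σ f(j) π(j) = 0`
and `Σ f(j)² π(j) ≤ 1`, one has
`Σ |Pf(j)|² π(j) ≤ 3 ET + P(T≥1) = 1 − (P(T=0) − 3 ET) < 1`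
(so the chain has the `L²`-spectral gap property). -/
theorem stmt13
    {Ω : Type*} [MeasurableSpace Ω] (μ : Measure Ω) [IsProbabilityMeasure μ]
    (T : Ω → ℕ) (hT : Measurable T)
    (hTint : Integrable (fun ω => (T ω : ℝ)) μ)
    (G : ℕ → ℝ) (hG : ∀ j, G j = (μ {ω | j ≤ T ω}).toReal)
    (hGpos : ∀ j, 0 < G j)
    (Pm : ℕ → ℝ) (hPm : ∀ j, Pm j = (μ {ω | T ω = j}).toReal)
    (ET : ℝ) (hET : ET = ∫ ω, (T ω : ℝ) ∂μ)
    (πd : ℕ → ℝ) (hπd : ∀ j, πd j = G j / (1 + ET))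
    (Pf : (ℕ → ℝ) → ℕ → ℝ)
    (hPf : ∀ f j, Pf f j = (Pm j / G j) * f 0 + (G (j + 1) / G j) * f (j + 1))
    (hcond1 : 3 * ET < Pm 0)
    (hcond2 : ∀ k : ℕ, 1 ≤ k → G (k + 1) / G k ≤ G 1) :
    (∀ f : ℕ → ℝ, Summable (fun j => f j ^ 2 * πd j) →
      (∑' j, f j * πd j) = 0 → (∑' j, f j ^ 2 * πd j) ≤ 1 →
      (∑' j, (Pf f j) ^ 2 * πd j) ≤ 3 * ET + G 1)
    ∧ 3 * ET + G 1 = 1 - (Pm 0 - 3 * ET) ∧ 3 * ET + G 1 < 1 := by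
  have hG0 : G 0 = 1 := by simp [hG]
  have hPmG : ∀ j, Pm j = G j - G (j + 1) := fun j => by
    simpa only [hPm, hG, measureReal_def] using measureReal_eq_eq_sub (μ := μ) hT j
  have hGanti : ∀ j, G (j + 1) ≤ G j := fun j => by
    rw [← sub_nonneg, ← hPmG, hPm]
    exact ENNReal.toReal_nonneg
  have htail : ∀ n, ∑ k ∈ Finset.range n, G (k + 1) ≤ ET := fun n => by
    simpa only [hG, hET, measureReal_def] using sum_range_measureReal_le_integral hT hTint n
  refine ⟨fun f hf2 hmean hnorm => ?_, by rw [hPmG, hG0]; ring, by linarith [hPmG 0]⟩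
  simp only [hπd] at hf2 hmean hnorm ⊢
  simp only [hPf, hPmG]
  exact tsum_sq_transition_le_three_mul_add hGpos hG0 hGanti htail hcond2 hf2 hmean hnorm
end

section
/- Let γ ∈ (0,1) and let T be the ℕ-valued random variable with P(T ≥ j) = γ^{j(j+1)/2} for j ≥ 0 (so P(T ≥ 0) = 1). Consider the Markov chain on ℕ with transition probabilities p_{j,0} = P(T = j)/P(T ≥ j), p_{j,j+1} = P(T ≥ j+1)/P(T ≥ j), p_{j,k} = 0 otherwise, stationary distribution π(j) = P(T ≥ j)/(1 + E T), and transition operator Pf(j) = (P(T = j)/P(T ≥ j))·f(0) + (P(T ≥ j+1)/P(T ≥ j))·f(j+1). Then lim_{k→∞} sup{ Σ_{j=k}^∞ |Pf(j)|² π(j) : f ∈ L²(π), Σ_j f(j)² π(j) ≤ 1 } = 0; in particular P is uniformly integrable in L² (2-U.I.). -/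
/-! For `j ≥ k`, `Pf j` is a convex combination of `f 0` and `f (j + 1)` with weight
`t j = γ ^ (j + 1)` on the latter, and `π (j + 1) = t j * π j`. Hence
`|Pf j|² π j ≤ 2 f(0)² π j + 2 t j · f(j+1)² π(j+1)`. As `f(0)² π(0) ≤ 1`, the first terms sum to
at most `2 π([k, ∞)) / π 0`, a tail of a convergent series, and the second ones to at most
`2 sup_{j ≥ k} t j`; both vanish as `k → ∞` because `t j → 0`. -/

open Filter Topology

/-- Transition operator of the chain moving `j ↦ j + 1` with probability `t j`, else `j ↦ 0`. -/
def renewalOp (t f : ℕ → ℝ) (j : ℕ) : ℝ := (1 - t j) * f 0 + t j * f (j + 1)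

lemma sq_one_sub_mul_add_mul_mul_le {a b s p : ℝ} (hs0 : 0 ≤ s) (hs1 : s ≤ 1) (hp : 0 ≤ p) :
    ((1 - s) * a + s * b) ^ 2 * p ≤ 2 * a ^ 2 * p + 2 * s * (b ^ 2 * (s * p)) := by
  have hsq : ((1 - s) * a + s * b) ^ 2 ≤ 2 * a ^ 2 + 2 * s ^ 2 * b ^ 2 := by
    nlinarith [sq_nonneg ((1 - s) * a - s * b), mul_nonneg hs0 (sub_nonneg.2 hs1),
      mul_nonneg (mul_nonneg hs0 (sub_nonneg.2 hs1)) (sq_nonneg a)]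
  calc ((1 - s) * a + s * b) ^ 2 * p ≤ (2 * a ^ 2 + 2 * s ^ 2 * b ^ 2) * p := by gcongr
    _ = 2 * a ^ 2 * p + 2 * s * (b ^ 2 * (s * p)) := by ring

lemma Summable.ite_le {g : ℕ → ℝ} (hg : Summable g) (k : ℕ) :
    Summable fun j => if k ≤ j then g j else 0 :=
  (hg.indicator {j | k ≤ j}).congr fun j => by simp [Set.indicator_apply]

lemma tendsto_tsum_ite_le_atTop_zero {g : ℕ → ℝ} (hg : Summable g) :
    Tendsto (fun k => ∑' j, if k ≤ j then g j else 0) atTop (𝓝 0) := by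
  refine (tendsto_sum_nat_add g).congr fun k => ?_
  rw [← (hg.ite_le k).sum_add_tsum_nat_add k, Finset.sum_eq_zero fun i hi => if_neg ?_]
  · simp
  · simpa using Finset.mem_range.1 hi

section RenewalChain

variable {π t : ℕ → ℝ}

lemma nonneg_of_succ_eq_mul (hπ0 : 0 ≤ π 0) (ht0 : ∀ j, 0 ≤ t j)
    (hstep : ∀ j, π (j + 1) = t j * π j) : ∀ j, 0 ≤ π j
  | 0 => hπ0
  | j + 1 => hstep j ▸ mul_nonneg (ht0 j) (nonneg_of_succ_eq_mul hπ0 ht0 hstep j)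

lemma summable_of_succ_eq_mul (hstep : ∀ j, π (j + 1) = t j * π j)
    (ht : Tendsto t atTop (𝓝 0)) : Summable π := by
  refine summable_of_ratio_norm_eventually_le (r := 1 / 2) (by norm_num) ?_
  filter_upwards [ht.norm.eventually (ge_mem_nhds (by norm_num : ‖(0 : ℝ)‖ < 1 / 2))] with j hj
  rw [hstep, norm_mul]
  gcongr

theorem tsum_ite_renewalOp_sq_mul_le (hπ0 : 0 < π 0) (ht0 : ∀ j, 0 ≤ t j)
    (ht1 : ∀ j, t j ≤ 1) (hstep : ∀ j, π (j + 1) = t j * π j) (hπs : Summable π) {k : ℕ} {δ : ℝ}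
    (hδ : ∀ j, k ≤ j → t j ≤ δ) {f : ℕ → ℝ} (hf : Summable fun j => f j ^ 2 * π j)
    (hf1 : ∑' j, f j ^ 2 * π j ≤ 1) :
    ∑' j, (if k ≤ j then renewalOp t f j ^ 2 * π j else 0) ≤
      2 * ((∑' j, if k ≤ j then π j else 0) / π 0) + 2 * δ := by
  have hπ := nonneg_of_succ_eq_mul hπ0.le ht0 hstep
  have hδ0 : 0 ≤ δ := (ht0 k).trans (hδ k le_rfl)
  have hterm : ∀ j, 0 ≤ f j ^ 2 * π j := fun j => mul_nonneg (sq_nonneg _) (hπ j)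
  have hf0 : f 0 ^ 2 ≤ 1 / π 0 := by
    rw [le_div_iff₀ hπ0]
    exact (hf.le_tsum 0 fun j _ => hterm j).trans hf1
  have hshift : Summable fun j => f (j + 1) ^ 2 * π (j + 1) := (summable_nat_add_iff 1).2 hf
  have hshift1 : ∑' j, f (j + 1) ^ 2 * π (j + 1) ≤ 1 :=
    (tsum_comp_le_tsum_of_inj hf hterm (add_left_injective 1)).trans hf1
  have htail := hπs.ite_le k
  have hpoint : ∀ j, (if k ≤ j then renewalOp t f j ^ 2 * π j else 0) ≤
      2 * f 0 ^ 2 * (if k ≤ j then π j else 0) + 2 * δ * (f (j + 1) ^ 2 * π (j + 1)) := by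
    intro j
    split_ifs with hkj
    · calc renewalOp t f j ^ 2 * π j
          ≤ 2 * f 0 ^ 2 * π j + 2 * t j * (f (j + 1) ^ 2 * (t j * π j)) :=
            sq_one_sub_mul_add_mul_mul_le (ht0 j) (ht1 j) (hπ j)
        _ ≤ 2 * f 0 ^ 2 * π j + 2 * δ * (f (j + 1) ^ 2 * π (j + 1)) := by
            rw [← hstep]; gcongr; exacts [hterm _, hδ j hkj]
    · simp only [mul_zero, zero_add]
      exact mul_nonneg (by positivity) (hterm _)
  have hnonneg : ∀ j, 0 ≤ if k ≤ j then renewalOp t f j ^ 2 * π j else 0 := fun j => by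
    split_ifs
    exacts [mul_nonneg (sq_nonneg _) (hπ j), le_rfl]
  have hbound := (htail.mul_left (2 * f 0 ^ 2)).add (hshift.mul_left (2 * δ))
  calc ∑' j, (if k ≤ j then renewalOp t f j ^ 2 * π j else 0)
      ≤ ∑' j, (2 * f 0 ^ 2 * (if k ≤ j then π j else 0) +
          2 * δ * (f (j + 1) ^ 2 * π (j + 1))) :=
        (Summable.of_nonneg_of_le hnonneg hpoint hbound).tsum_le_tsum hpoint hbound
    _ = 2 * f 0 ^ 2 * (∑' j, if k ≤ j then π j else 0) +
          2 * δ * ∑' j, f (j + 1) ^ 2 * π (j + 1) := by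
        rw [(htail.mul_left _).tsum_add (hshift.mul_left _), tsum_mul_left, tsum_mul_left]
    _ ≤ 2 * (1 / π 0) * (∑' j, if k ≤ j then π j else 0) + 2 * δ * 1 := by
        have : 0 ≤ ∑' j, if k ≤ j then π j else 0 := tsum_nonneg fun j => by
          split_ifs
          exacts [hπ j, le_rfl]
        gcongr
    _ = 2 * ((∑' j, if k ≤ j then π j else 0) / π 0) + 2 * δ := by ring

theorem exists_tsum_ite_renewalOp_sq_mul_le (hπ0 : 0 < π 0) (ht0 : ∀ j, 0 ≤ t j)
    (ht1 : ∀ j, t j ≤ 1) (hstep : ∀ j, π (j + 1) = t j * π j) (ht : Tendsto t atTop (𝓝 0))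
    {ε : ℝ} (hε : 0 < ε) :
    ∃ K : ℕ, ∀ k, K ≤ k → ∀ f : ℕ → ℝ, Summable (fun j => f j ^ 2 * π j) →
      ∑' j, f j ^ 2 * π j ≤ 1 → ∑' j, (if k ≤ j then renewalOp t f j ^ 2 * π j else 0) ≤ ε := by
  have hπs := summable_of_succ_eq_mul hstep ht
  have htail := (tendsto_tsum_ite_le_atTop_zero hπs).div_const (π 0)
  rw [zero_div] at htail
  obtain ⟨K₁, hK₁⟩ := eventually_atTop.1 (ht.eventually (ge_mem_nhds (by positivity : 0 < ε / 4)))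
  obtain ⟨K₂, hK₂⟩ :=
    eventually_atTop.1 (htail.eventually (ge_mem_nhds (by positivity : 0 < ε / 4)))
  refine ⟨max K₁ K₂, fun k hk f hf hf1 => ?_⟩
  have hδ : ∀ j, k ≤ j → t j ≤ ε / 4 := fun j hj => hK₁ j ((le_max_left _ _).trans (hk.trans hj))
  calc _ ≤ 2 * ((∑' j, if k ≤ j then π j else 0) / π 0) + 2 * (ε / 4) :=
        tsum_ite_renewalOp_sq_mul_le hπ0 ht0 ht1 hstep hπs hδ hf hf1
    _ ≤ ε := by linarith [hK₂ k ((le_max_right _ _).trans hk)]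

end RenewalChain

lemma triangle_succ_div_two (j : ℕ) : (j + 1) * (j + 1 + 1) / 2 = j * (j + 1) / 2 + (j + 1) := by
  rw [show (j + 1) * (j + 1 + 1) = j * (j + 1) + (j + 1) * 2 by ring,
    Nat.add_mul_div_right _ _ two_pos]

/-- **Example (2-U.I. for the chain with `P(T ≥ j) = γ^{j(j+1)/2}`).** For `γ ∈ (0,1)` let
`G j = P(T ≥ j) = γ^{j(j+1)/2}`, `E T = Σ_{j≥0} G(j+1)`, `π(j) = G j/(1+ET)` and
`Pf(j) = ((G j − G(j+1))/G j) f(0) + (G(j+1)/G j) f(j+1)`. Then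
`lim_{k→∞} sup{ Σ_{j≥k} |Pf(j)|² π(j) : ‖f‖_{L²(π)} ≤ 1 } = 0`, i.e. the transition
operator is uniformly integrable in `L²` (2-U.I.). -/
theorem stmt14
    (γ : ℝ) (hγ0 : 0 < γ) (hγ1 : γ < 1)
    (G : ℕ → ℝ) (hG : ∀ j, G j = γ ^ (j * (j + 1) / 2))
    (ET : ℝ) (hET : ET = ∑' j : ℕ, G (j + 1))
    (πd : ℕ → ℝ) (hπd : ∀ j, πd j = G j / (1 + ET))
    (Pf : (ℕ → ℝ) → ℕ → ℝ)
    (hPf : ∀ f j, Pf f j = ((G j - G (j + 1)) / G j) * f 0 + (G (j + 1) / G j) * f (j + 1)) :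
    ∀ ε : ℝ, 0 < ε → ∃ K : ℕ, ∀ k : ℕ, K ≤ k → ∀ f : ℕ → ℝ,
      Summable (fun j => f j ^ 2 * πd j) → (∑' j, f j ^ 2 * πd j) ≤ 1 →
      (∑' j : ℕ, if k ≤ j then (Pf f j) ^ 2 * πd j else 0) ≤ ε := by
  intro ε hε
  have hGpos : ∀ j, 0 < G j := fun j => hG j ▸ pow_pos hγ0 _
  have hGstep : ∀ j, G (j + 1) = γ ^ (j + 1) * G j := fun j => by
    rw [hG, hG, triangle_succ_div_two, pow_add, mul_comm]
  have hET0 : 0 < 1 + ET := by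
    have : 0 ≤ ET := hET ▸ tsum_nonneg fun j => (hGpos _).le
    linarith
  have hPf' : Pf = renewalOp fun j => γ ^ (j + 1) := by
    ext f j
    rw [hPf, renewalOp, hGstep, sub_div, div_self (hGpos j).ne',
      mul_div_cancel_right₀ _ (hGpos j).ne']
  obtain ⟨K, hK⟩ := exists_tsum_ite_renewalOp_sq_mul_le (t := fun j => γ ^ (j + 1))
    (hπd 0 ▸ div_pos (hGpos 0) hET0) (fun j => by positivity)
    (fun j => pow_le_one₀ hγ0.le hγ1.le) (fun j => by rw [hπd, hπd, hGstep, mul_div_assoc])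
    ((tendsto_pow_atTop_nhds_zero_of_lt_one hγ0.le hγ1).comp (tendsto_add_atTop_nat 1)) hε
  exact ⟨K, hPf' ▸ hK⟩
end

section
/- Let γ ∈ (0,1) and let T be the ℕ-valued random variable with P(T ≥ j) = γ^{j(j+1)/2} for j ≥ 0. Consider the Markov transition operator on L²(π), where π(j) = P(T ≥ j)/(1 + E T), given by Pf(j) = (P(T = j)/P(T ≥ j))·f(0) + (P(T ≥ j+1)/P(T ≥ j))·f(j+1). For k ≥ 1 define f_k ∈ L²(π) by f_k(k) = √((1 + E T)/P(T ≥ k)) and f_k(j) = 0 for j ≠ k, so that ‖f_k‖_{L²(π)} = 1. Then for every q > 2, ‖P f_k‖_{L^q(π)}^q = (1 + E T)^{q/2 − 1}·γ^{(1/4)(k²(2−q) + k(3q−2))} → +∞ as k → ∞; consequently P is not a bounded linear operator from L²(π) to L^q(π) for any q > 2, i.e. P is not hyperbounded. -/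
open Filter

/-!
The operator `P` maps the normalised indicator `f_k` of `{k}` to a multiple of the indicator
of `{k - 1}`, so `‖P f_k‖_q^q` is a single term, equal to `(1 + E T)^{q/2 - 1}` times a power of
`γ` whose exponent is a quadratic in `k` with leading coefficient `(2 - q)/4 < 0`. As `γ < 1`
these norms blow up, which rules out any bound `‖P g‖_q ≤ C` on the unit ball of `L²(π)`.
-/

-- The age chain of a renewal process whose lifetime `T` has `P(T ≥ j) = G j`.
noncomputable def renewalAgeChain (G : ℕ → ℝ) (f : ℕ → ℝ) (j : ℕ) : ℝ :=
  (G j - G (j + 1)) / G j * f 0 + G (j + 1) / G j * f (j + 1)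

theorem renewalAgeChain_ite_succ (G : ℕ → ℝ) (m : ℕ) (c : ℝ) :
    renewalAgeChain G (fun i => if i = m + 1 then c else 0)
      = fun j => if j = m then G (m + 1) / G m * c else 0 := by
  funext j
  by_cases hj : j = m <;> simp [renewalAgeChain, hj]

theorem tsum_ite_sq_mul (w : ℕ → ℝ) (k : ℕ) (c : ℝ) :
    ∑' j, (if j = k then c else 0) ^ 2 * w j = c ^ 2 * w k := by
  rw [tsum_eq_single k fun j hj => by simp [hj]]
  simp

theorem tsum_abs_ite_rpow_mul {q : ℝ} (hq : q ≠ 0) (w : ℕ → ℝ) (k : ℕ) (c : ℝ) :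
    ∑' j, |if j = k then c else 0| ^ q * w j = |c| ^ q * w k := by
  rw [tsum_eq_single k fun j hj => by simp [hj, Real.zero_rpow hq]]
  simp

theorem div_mul_sqrt_div_rpow_mul_div {E x y : ℝ} (hE : 0 < E) (hx : 0 < x) (hy : 0 < y)
    (q : ℝ) :
    (y / x * √(E / y)) ^ q * (x / E) = E ^ (q / 2 - 1) * (y ^ (q / 2) * x ^ (1 - q)) := by
  have hbase : 0 < y / x * √(E / y) := by positivity
  apply Real.log_injOn_pos (Set.mem_Ioi.2 (by positivity)) (Set.mem_Ioi.2 (by positivity))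
  rw [Real.log_mul (by positivity) (by positivity), Real.log_rpow hbase,
    Real.log_mul (by positivity) (by positivity), Real.log_div hy.ne' hx.ne',
    Real.log_sqrt (by positivity), Real.log_div hE.ne' hy.ne', Real.log_div hx.ne' hE.ne',
    Real.log_mul (by positivity) (by positivity), Real.log_mul (by positivity) (by positivity),
    Real.log_rpow hE, Real.log_rpow hy, Real.log_rpow hx]
  ring

theorem Nat.cast_mul_succ_div_two (n : ℕ) :
    ((n * (n + 1) / 2 : ℕ) : ℝ) = n * (n + 1) / 2 := by
  rw [Nat.cast_div_charZero (Nat.even_mul_succ_self n).two_dvd]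
  push_cast
  ring

theorem tendsto_quadratic_natCast_atBot {a : ℝ} (ha : a < 0) (b : ℝ) :
    Tendsto (fun k : ℕ => a * (k : ℝ) ^ 2 + b * k) atTop atBot := by
  have hk := tendsto_natCast_atTop_atTop (R := ℝ)
  refine (hk.atTop_mul_atBot₀ (tendsto_atBot_add_const_right _ b
    (hk.const_mul_atTop_of_neg ha))).congr fun k => ?_
  ring

section Triangular

variable {γ : ℝ} (hγ : 0 < γ) {G : ℕ → ℝ} (hG : ∀ j, G j = γ ^ (j * (j + 1) / 2))
include hγ hG

theorem tsum_abs_renewalAgeChain_ite_rpow_of_triangular {E : ℝ} (hE : 0 < E) {q : ℝ} (hq : q ≠ 0)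
    {k : ℕ} (hk : 1 ≤ k) :
    ∑' j, |renewalAgeChain G (fun i => if i = k then √(E / G k) else 0) j| ^ q * (G j / E)
      = E ^ (q / 2 - 1) * γ ^ ((1 / 4) * ((k : ℝ) ^ 2 * (2 - q) + (k : ℝ) * (3 * q - 2))) := by
  obtain ⟨m, rfl⟩ := Nat.exists_eq_add_of_le' hk
  have hGr : ∀ j : ℕ, G j = γ ^ ((j : ℝ) * (j + 1) / 2) := fun j => by
    rw [hG, ← Real.rpow_natCast, Nat.cast_mul_succ_div_two]
  have hGpos : ∀ j, 0 < G j := fun j => hG j ▸ pow_pos hγ _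
  rw [renewalAgeChain_ite_succ, tsum_abs_ite_rpow_mul hq,
    abs_of_nonneg (by have := hGpos m; have := hGpos (m + 1); positivity),
    div_mul_sqrt_div_rpow_mul_div hE (hGpos m) (hGpos (m + 1)), hGr, hGr,
    ← Real.rpow_mul hγ.le, ← Real.rpow_mul hγ.le, ← Real.rpow_add hγ]
  push_cast
  ring_nf

end Triangular

/-- **Example (failure of hyperboundedness for the chain with `P(T ≥ j) = γ^{j(j+1)/2}`).**
With `G j = γ^{j(j+1)/2}`, `E T = Σ_{j≥0} G(j+1)`, `π(j) = G j/(1+ET)`,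
`Pf(j) = ((G j − G(j+1))/G j) f(0) + (G(j+1)/G j) f(j+1)` and the unit vectors
`f_k = √((1+ET)/G k)·1_{{k}}`, one has, for every `q > 2`,
`‖P f_k‖_{L^q(π)}^q = (1+ET)^{q/2−1} γ^{(1/4)(k²(2−q)+k(3q−2))} → +∞` as `k → ∞`;
consequently `P` is not a bounded operator from `L²(π)` to `L^q(π)` for any `q > 2`,
i.e. `P` is not hyperbounded. -/
theorem stmt15
    (γ : ℝ) (hγ0 : 0 < γ) (hγ1 : γ < 1)
    (G : ℕ → ℝ) (hG : ∀ j, G j = γ ^ (j * (j + 1) / 2))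
    (ET : ℝ) (hET : ET = ∑' j : ℕ, G (j + 1))
    (πd : ℕ → ℝ) (hπd : ∀ j, πd j = G j / (1 + ET))
    (Pf : (ℕ → ℝ) → ℕ → ℝ)
    (hPf : ∀ f j, Pf f j = ((G j - G (j + 1)) / G j) * f 0 + (G (j + 1) / G j) * f (j + 1))
    (f : ℕ → ℕ → ℝ)
    (hf : ∀ k j, f k j = if j = k then Real.sqrt ((1 + ET) / G k) else 0) :
    (∀ k : ℕ, (∑' j, f k j ^ 2 * πd j) = 1)
    ∧ ∀ q : ℝ, 2 < q →
      ((∀ k : ℕ, 1 ≤ k →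
        (∑' j : ℕ, |Pf (f k) j| ^ q * πd j)
          = (1 + ET) ^ (q / 2 - 1)
              * γ ^ ((1 / 4) * ((k : ℝ) ^ 2 * (2 - q) + (k : ℝ) * (3 * q - 2))))
      ∧ Tendsto (fun k : ℕ => ∑' j : ℕ, |Pf (f k) j| ^ q * πd j) atTop atTop
      ∧ ¬ ∃ C : ℝ, ∀ g : ℕ → ℝ, Summable (fun j => g j ^ 2 * πd j) →
          (∑' j, g j ^ 2 * πd j) ≤ 1 → (∑' j, |Pf g j| ^ q * πd j) ≤ C) := by
  have hGpos : ∀ j, 0 < G j := fun j => hG j ▸ pow_pos hγ0 _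
  have hE : 0 < 1 + ET := by linarith [hET ▸ tsum_nonneg fun j => (hGpos (j + 1)).le]
  obtain rfl : Pf = renewalAgeChain G := funext fun g => funext (hPf g)
  obtain rfl : f = fun k j => if j = k then √((1 + ET) / G k) else 0 :=
    funext fun k => funext (hf k)
  obtain rfl : πd = fun j => G j / (1 + ET) := funext hπd
  have hunit : ∀ k, ∑' j, (if j = k then √((1 + ET) / G k) else 0) ^ 2 * (G j / (1 + ET)) = 1 :=
    fun k => by
      rw [tsum_ite_sq_mul, Real.sq_sqrt (div_pos hE (hGpos k)).le]
      field_simp [(hGpos k).ne']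
  refine ⟨hunit, fun q hq => ?_⟩
  have hnorm := fun k (hk : 1 ≤ k) =>
    tsum_abs_renewalAgeChain_ite_rpow_of_triangular hγ0 hG hE (by linarith : q ≠ 0) hk
  have hexp := tendsto_quadratic_natCast_atBot (by linarith : (2 - q) / 4 < 0) ((3 * q - 2) / 4)
  have htend : Tendsto (fun k : ℕ => ∑' j, |renewalAgeChain G (fun i => if i = k then
      √((1 + ET) / G k) else 0) j| ^ q * (G j / (1 + ET))) atTop atTop := by
    refine (((tendsto_rpow_atBot_of_base_lt_one γ hγ0 hγ1).comp hexp).const_mul_atTop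
      (Real.rpow_pos_of_pos hE (q / 2 - 1))).congr' ?_
    filter_upwards [eventually_ge_atTop 1] with k hk
    rw [hnorm k hk, Function.comp_apply]
    ring_nf
  refine ⟨hnorm, htend, fun ⟨C, hC⟩ => ?_⟩
  obtain ⟨k, hk⟩ := (htend.eventually_gt_atTop C).exists
  refine (hC _ (summable_of_ne_finset_zero (s := {k}) fun j hj => ?_) (hunit k).le).not_gt hk
  simp [Finset.mem_singleton.not.mp hj]
end

section
/- Let 0 < |ρ| < 1, let π be the standard Gaussian measure on ℝ with density (2π)^{-1/2} e^{-y²/2}, and define p(x,y) = (1 − ρ²)^{-1/2}·exp(−ρ²x²/(2(1−ρ²)) + ρxy/(1−ρ²) − ρ²y²/(2(1−ρ²))). Then for every q with 2 < q < (1 + |ρ|)/|ρ|, the double integral ∫∫ p(x,y)^q dπ(x) dπ(y) is finite. -/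
/-!
Using `2ρxy ≤ |ρ|(x² + y²)` and `1 - ρ² = (1 - |ρ|)(1 + |ρ|)`, the kernel satisfies
`p(x,y)^q ≤ (1 - ρ²)^(-q/2) e^(a x²) e^(a y²)` with `a = q|ρ| / (2(1 + |ρ|))`. This bound
factorises, and `a < 1/2` is exactly the condition `q < (1 + |ρ|)/|ρ|`, under which `e^(a y²)`
is integrable against the standard Gaussian.
-/

open MeasureTheory Filter

noncomputable section

lemma lintegral_exp_mul_sq_stdGaussian_lt_top {a : ℝ} (ha : a < 1 / 2) :
    ∫⁻ y, ENNReal.ofReal (Real.exp (a * y ^ 2))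
      ∂(volume.withDensity fun y =>
        ENNReal.ofReal ((Real.sqrt (2 * Real.pi))⁻¹ * Real.exp (-(y ^ 2) / 2))) < ⊤ := by
  rw [lintegral_withDensity_eq_lintegral_mul _ (by fun_prop) (by fun_prop)]
  have hint : Integrable fun y : ℝ =>
      (Real.sqrt (2 * Real.pi))⁻¹ * Real.exp (-(1 / 2 - a) * y ^ 2) :=
    (integrable_exp_neg_mul_sq (by linarith)).const_mul _
  refine lt_of_eq_of_lt (lintegral_congr fun y => ?_) hint.lintegral_lt_top
  rw [Pi.mul_apply, ← ENNReal.ofReal_mul (by positivity), mul_assoc, ← Real.exp_add]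
  ring_nf

lemma ar1_exponent_le {ρ : ℝ} (hρ : |ρ| < 1) (x y : ℝ) :
    -(ρ ^ 2 * x ^ 2) / (2 * (1 - ρ ^ 2)) + ρ * x * y / (1 - ρ ^ 2)
        - ρ ^ 2 * y ^ 2 / (2 * (1 - ρ ^ 2))
      ≤ |ρ| / (2 * (1 + |ρ|)) * (x ^ 2 + y ^ 2) := by
  have hsq : ρ ^ 2 = |ρ| ^ 2 := (sq_abs ρ).symm
  have hρ0 := abs_nonneg ρ
  have hcross : 2 * (ρ * x * y) ≤ |ρ| * (x ^ 2 + y ^ 2) := by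
    have h := two_mul_le_add_sq |x| |y|
    rw [sq_abs, sq_abs] at h
    calc 2 * (ρ * x * y) ≤ 2 * (|ρ| * |x| * |y|) := by
          rw [← abs_mul, ← abs_mul]
          exact mul_le_mul_of_nonneg_left (le_abs_self _) zero_le_two
      _ = |ρ| * (2 * |x| * |y|) := by ring
      _ ≤ |ρ| * (x ^ 2 + y ^ 2) := by gcongr
  have hpos : 0 < 1 - ρ ^ 2 := by nlinarith
  rw [show -(ρ ^ 2 * x ^ 2) / (2 * (1 - ρ ^ 2)) + ρ * x * y / (1 - ρ ^ 2)
        - ρ ^ 2 * y ^ 2 / (2 * (1 - ρ ^ 2))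
      = (2 * (ρ * x * y) - ρ ^ 2 * (x ^ 2 + y ^ 2)) / (2 * (1 - ρ ^ 2)) by field_simp; ring,
    div_le_iff₀ (by positivity)]
  rw [hsq] at hpos ⊢
  field_simp
  nlinarith [mul_nonneg (mul_nonneg hρ0 (sub_nonneg.2 hρ.le))
    (add_nonneg (sq_nonneg x) (sq_nonneg y))]

lemma ar1_density_rpow_le {ρ q : ℝ} (hρ : |ρ| < 1) (hq : 0 ≤ q) (x y : ℝ) :
    ((Real.sqrt (1 - ρ ^ 2))⁻¹ *
        Real.exp (-(ρ ^ 2 * x ^ 2) / (2 * (1 - ρ ^ 2)) + ρ * x * y / (1 - ρ ^ 2)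
          - ρ ^ 2 * y ^ 2 / (2 * (1 - ρ ^ 2)))) ^ q
      ≤ (Real.sqrt (1 - ρ ^ 2))⁻¹ ^ q * Real.exp (q * |ρ| / (2 * (1 + |ρ|)) * x ^ 2)
          * Real.exp (q * |ρ| / (2 * (1 + |ρ|)) * y ^ 2) := by
  rw [Real.mul_rpow (by positivity) (Real.exp_nonneg _), ← Real.exp_mul,
    mul_assoc ((Real.sqrt (1 - ρ ^ 2))⁻¹ ^ q), ← Real.exp_add]
  gcongr
  calc _ ≤ |ρ| / (2 * (1 + |ρ|)) * (x ^ 2 + y ^ 2) * q :=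
        mul_le_mul_of_nonneg_right (ar1_exponent_le hρ x y) hq
    _ = _ := by ring

theorem stmt16_general
    (ρ : ℝ) (hρ1 : |ρ| < 1)
    (π : Measure ℝ)
    (hπ : π = volume.withDensity fun y =>
      ENNReal.ofReal ((Real.sqrt (2 * Real.pi))⁻¹ * Real.exp (-(y ^ 2) / 2)))
    (p : ℝ → ℝ → ℝ)
    (hp : ∀ x y, p x y = (Real.sqrt (1 - ρ ^ 2))⁻¹ *
      Real.exp (-(ρ ^ 2 * x ^ 2) / (2 * (1 - ρ ^ 2)) + ρ * x * y / (1 - ρ ^ 2)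
        - ρ ^ 2 * y ^ 2 / (2 * (1 - ρ ^ 2)))) :
    ∀ q : ℝ, 2 < q → q < (1 + |ρ|) / |ρ| →
      (∫⁻ x, ∫⁻ y, ENNReal.ofReal (p x y ^ q) ∂π ∂π) < ⊤ := by
  intro q hq2 hq
  set a := q * |ρ| / (2 * (1 + |ρ|))
  set K := (Real.sqrt (1 - ρ ^ 2))⁻¹ ^ q
  have ha : a < 1 / 2 := by
    have hqρ : q * |ρ| < 1 + |ρ| := by
      rcases (abs_nonneg ρ).eq_or_lt with h | h
      · simp [← h]
      · exact (lt_div_iff₀ h).mp hq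
    rw [div_lt_iff₀ (by positivity)]
    linarith
  have hgauss : ∫⁻ y, ENNReal.ofReal (Real.exp (a * y ^ 2)) ∂π < ⊤ :=
    hπ ▸ lintegral_exp_mul_sq_stdGaussian_lt_top ha
  calc (∫⁻ x, ∫⁻ y, ENNReal.ofReal (p x y ^ q) ∂π ∂π)
      ≤ ∫⁻ x, ∫⁻ y, ENNReal.ofReal K * ENNReal.ofReal (Real.exp (a * x ^ 2))
          * ENNReal.ofReal (Real.exp (a * y ^ 2)) ∂π ∂π := by
        refine lintegral_mono fun x => lintegral_mono fun y => ?_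
        rw [← ENNReal.ofReal_mul (by positivity), ← ENNReal.ofReal_mul (by positivity), hp]
        exact ENNReal.ofReal_le_ofReal (ar1_density_rpow_le hρ1 (by linarith) x y)
    _ = ENNReal.ofReal K * (∫⁻ x, ENNReal.ofReal (Real.exp (a * x ^ 2)) ∂π)
          * ∫⁻ y, ENNReal.ofReal (Real.exp (a * y ^ 2)) ∂π := by
        rw [lintegral_lintegral_mul (by fun_prop) (by fun_prop),
          lintegral_const_mul _ (by fun_prop)]
    _ < ⊤ := ENNReal.mul_lt_top (ENNReal.mul_lt_top ENNReal.ofReal_lt_top hgauss) hgauss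

/-- **Gaussian hyperboundedness of the AR(1) transition density.** Let `0 < |ρ| < 1`, let
`π` be the standard Gaussian measure on `ℝ`, and let
`p(x,y) = (1−ρ²)^{-1/2} exp(−ρ²x²/(2(1−ρ²)) + ρxy/(1−ρ²) − ρ²y²/(2(1−ρ²)))` be the density
of the AR(1) Gaussian transition kernel with respect to `π`. Then for every `q` with
`2 < q < (1+|ρ|)/|ρ|`, the double integral `∫∫ p(x,y)^q dπ(x) dπ(y)` is finite. -/
theorem stmt16
    (ρ : ℝ) (hρ0 : 0 < |ρ|) (hρ1 : |ρ| < 1)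
    (π : Measure ℝ)
    (hπ : π = volume.withDensity fun y =>
      ENNReal.ofReal ((Real.sqrt (2 * Real.pi))⁻¹ * Real.exp (-(y ^ 2) / 2)))
    (p : ℝ → ℝ → ℝ)
    (hp : ∀ x y, p x y = (Real.sqrt (1 - ρ ^ 2))⁻¹ *
      Real.exp (-(ρ ^ 2 * x ^ 2) / (2 * (1 - ρ ^ 2)) + ρ * x * y / (1 - ρ ^ 2)
        - ρ ^ 2 * y ^ 2 / (2 * (1 - ρ ^ 2)))) :
    ∀ q : ℝ, 2 < q → q < (1 + |ρ|) / |ρ| →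
      (∫⁻ x, ∫⁻ y, ENNReal.ofReal (p x y ^ q) ∂π ∂π) < ⊤ :=
  stmt16_general ρ hρ1 π hπ p hp
end
end

section
/- Let S = [0,3) and define the Markov transition kernel P on S by: P(x, {x+1}) = 1 and P(x+1, {x+2}) = 1 for x ∈ [0,1), and P(x+2, B) = Leb(B)/2 for x ∈ [0,1) and Borel B ⊆ [0,1) ∪ [2,3). Let π be the probability measure on S with density p(x) = (1/4)·1_{[0,2)}(x) + (1/2)·1_{[2,3)}(x) with respect to Lebesgue measure. Then for every f ∈ L²(π) with ∫ f dπ = 0, one has ∫ (P³f)² dπ ≤ (27/32)·∫ f² dπ; i.e. the 3-step transition operator P³ has the L²-spectral gap property. -/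
/-! `P³ f` is constant on each of the unit intervals `[0,1)`, `[1,2)`, `[2,3)`: from `[0,2)`
the chain moves deterministically by `1`, and from `[2,3)` it regenerates uniformly on
`[0,1) ∪ [2,3)`. Its three values are therefore linear in the integrals `I₁, I₂, I₃` of `f`
over these intervals, so `∫ (P³f)² dπ` is a quadratic form in `(I₁, I₂, I₃)`. By Jensen on each
interval, `∫ f² dπ ≥ I₁²/4 + I₂²/4 + I₃²/2`, and `∫ f dπ = 0` reads `I₁ + I₂ + 2 I₃ = 0`;
the claim becomes an elementary inequality between quadratic forms. -/

open MeasureTheory Filter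

noncomputable section

/-- The transition operator of the Markov chain on `S = [0,3)` given by
`P(x,{x+1}) = 1` for `x ∈ [0,1)`, `P(x+1,{x+2}) = 1` for `x ∈ [0,1)` and
`P(x+2,B) = Leb(B)/2` for `x ∈ [0,1)`, `B ⊆ [0,1) ∪ [2,3)`:
`(Pf)(x) = ∫ f(y) P(x,dy)`. -/
def PopSkel (f : ℝ → ℝ) (x : ℝ) : ℝ :=
  if x ∈ Set.Ico (0 : ℝ) 2 then f (x + 1)
  else if x ∈ Set.Ico (2 : ℝ) 3 then
    (1 / 2) * ∫ y in Set.Ico (0 : ℝ) 1 ∪ Set.Ico (2 : ℝ) 3, f y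
  else 0

/-- The stationary distribution of the chain: the measure on `[0,3)` with density
`(1/4)·1_{[0,2)} + (1/2)·1_{[2,3)}` with respect to Lebesgue measure. -/
def piSkel : Measure ℝ :=
  volume.withDensity fun x =>
    ENNReal.ofReal (if x ∈ Set.Ico (0 : ℝ) 2 then 1 / 4
      else if x ∈ Set.Ico (2 : ℝ) 3 then 1 / 2 else 0)


open Set

lemma sq_integral_le_integral_sq {Ω : Type*} [MeasurableSpace Ω] {μ : Measure Ω}
    [IsProbabilityMeasure μ] {f : Ω → ℝ} (hf : MemLp f 2 μ) :
    (∫ x, f x ∂μ) ^ 2 ≤ ∫ x, f x ^ 2 ∂μ := by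
  have h := ProbabilityTheory.variance_nonneg f μ
  rw [ProbabilityTheory.variance_eq_sub hf] at h
  simpa only [Pi.pow_apply, sub_nonneg] using h

lemma sq_setIntegral_le_setIntegral_sq {Ω : Type*} [MeasurableSpace Ω] {μ : Measure Ω}
    {s : Set Ω} (hs : μ s = 1) {f : Ω → ℝ} (hf : MemLp f 2 (μ.restrict s)) :
    (∫ x in s, f x ∂μ) ^ 2 ≤ ∫ x in s, f x ^ 2 ∂μ :=
  haveI : IsProbabilityMeasure (μ.restrict s) := ⟨by rwa [Measure.restrict_apply_univ]⟩
  sq_integral_le_integral_sq hf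

lemma map_add_right_volume_restrict_Ico (a b t : ℝ) :
    (volume.restrict (Ico a b)).map (· + t) = volume.restrict (Ico (a + t) (b + t)) := by
  have h := (measurePreserving_add_right volume t).restrict_preimage_emb
    (measurableEmbedding_addRight t) (Ico (a + t) (b + t))
  rw [preimage_add_const_Ico, add_sub_cancel_right, add_sub_cancel_right] at h
  exact h.map_eq

lemma setIntegral_Ico_comp_add_right (f : ℝ → ℝ) (a b t : ℝ) :
    ∫ y in Ico a b, f (y + t) = ∫ y in Ico (a + t) (b + t), f y := by
  rw [← map_add_right_volume_restrict_Ico]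
  exact (integral_map_equiv (MeasurableEquiv.addRight t) f).symm

lemma integrableOn_Ico_comp_add_right {f : ℝ → ℝ} {a b t : ℝ}
    (hf : IntegrableOn f (Ico (a + t) (b + t))) :
    IntegrableOn (fun y => f (y + t)) (Ico a b) := by
  rw [IntegrableOn, ← map_add_right_volume_restrict_Ico] at hf
  exact (integrable_map_equiv (MeasurableEquiv.addRight t) f).1 hf

lemma setIntegral_Ico_of_eqOn_const {g : ℝ → ℝ} {a b c : ℝ} (hab : b = a + 1)
    (hg : EqOn g (fun _ => c) (Ico a b)) :
    ∫ x in Ico a b, g x = c := by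
  rw [setIntegral_congr_fun measurableSet_Ico hg, setIntegral_const, measureReal_def,
    Real.volume_Ico, hab, add_sub_cancel_left, ENNReal.toReal_ofReal zero_le_one, one_smul]

lemma integrableOn_Ico_of_eqOn_const {g : ℝ → ℝ} {a b c : ℝ}
    (hg : EqOn g (fun _ => c) (Ico a b)) :
    IntegrableOn g (Ico a b) :=
  (integrableOn_const (by simp)).congr_fun hg.symm measurableSet_Ico

/-- On `[2,3)` the chain regenerates with law `Leb/2` on `[0,1) ∪ [2,3)`, so there
`P g = regenIntegral g / 2`. -/
def regenIntegral (g : ℝ → ℝ) : ℝ :=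
  ∫ y in Ico (0 : ℝ) 1 ∪ Ico (2 : ℝ) 3, g y

section Skeleton

variable {g : ℝ → ℝ}

lemma regenIntegral_eq_add (hg : IntegrableOn g (Ico 0 3)) :
    regenIntegral g = (∫ y in Ico (0 : ℝ) 1, g y) + ∫ y in Ico (2 : ℝ) 3, g y :=
  setIntegral_union (Ico_disjoint_Ico.2 (by norm_num)) measurableSet_Ico
    (hg.mono_set (Ico_subset_Ico le_rfl (by norm_num)))
    (hg.mono_set (Ico_subset_Ico (by norm_num) le_rfl))

lemma PopSkel_of_mem_Ico_zero_two {x : ℝ} (hx : x ∈ Ico (0 : ℝ) 2) :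
    PopSkel g x = g (x + 1) :=
  if_pos hx

lemma PopSkel_of_mem_Ico_two_three {x : ℝ} (hx : x ∈ Ico (2 : ℝ) 3) :
    PopSkel g x = (1 / 2) * regenIntegral g := by
  have hx' : x ∉ Ico (0 : ℝ) 2 := fun h => h.2.not_ge hx.1
  rw [PopSkel, if_neg hx', if_pos hx, regenIntegral]

lemma integrableOn_PopSkel (hg : IntegrableOn g (Ico 0 3)) :
    IntegrableOn (PopSkel g) (Ico 0 3) := by
  rw [← Ico_union_Ico_eq_Ico (zero_le_two : (0 : ℝ) ≤ 2) (by norm_num : (2 : ℝ) ≤ 3)]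
  refine IntegrableOn.union ?_ ?_
  · have h : IntegrableOn (fun y => g (y + 1)) (Ico 0 2) :=
      integrableOn_Ico_comp_add_right (hg.mono_set (Ico_subset_Ico (by norm_num) (by norm_num)))
    exact h.congr_fun (fun x hx => (PopSkel_of_mem_Ico_zero_two hx).symm) measurableSet_Ico
  · exact integrableOn_Ico_of_eqOn_const fun x hx => PopSkel_of_mem_Ico_two_three hx

lemma setIntegral_Ico_PopSkel {a b : ℝ} (ha : 0 ≤ a) (hb : b ≤ 2) :
    ∫ x in Ico a b, PopSkel g x = ∫ x in Ico (a + 1) (b + 1), g x := by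
  rw [← setIntegral_Ico_comp_add_right]
  refine setIntegral_congr_fun measurableSet_Ico fun x hx => ?_
  exact PopSkel_of_mem_Ico_zero_two ⟨ha.trans hx.1, hx.2.trans_le hb⟩

lemma regenIntegral_PopSkel (hg : IntegrableOn g (Ico 0 3)) :
    regenIntegral (PopSkel g) = (∫ y in Ico (1 : ℝ) 2, g y) + (1 / 2) * regenIntegral g := by
  rw [regenIntegral_eq_add (integrableOn_PopSkel hg), setIntegral_Ico_PopSkel le_rfl one_le_two,
    setIntegral_Ico_of_eqOn_const (by norm_num) fun x hx => PopSkel_of_mem_Ico_two_three hx,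
    zero_add, one_add_one_eq_two]

lemma PopSkel_cube_eqOn {f : ℝ → ℝ} :
    EqOn (PopSkel (PopSkel (PopSkel f))) (fun _ => (1 / 2) * regenIntegral f) (Ico 0 1) ∧
    EqOn (PopSkel (PopSkel (PopSkel f)))
      (fun _ => (1 / 2) * regenIntegral (PopSkel f)) (Ico 1 2) ∧
    EqOn (PopSkel (PopSkel (PopSkel f)))
      (fun _ => (1 / 2) * regenIntegral (PopSkel (PopSkel f))) (Ico 2 3) := by
  refine ⟨fun x hx => ?_, fun x hx => ?_, fun x hx => PopSkel_of_mem_Ico_two_three hx⟩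
  · rw [PopSkel_of_mem_Ico_zero_two ⟨hx.1, by linarith [hx.2]⟩,
      PopSkel_of_mem_Ico_zero_two ⟨by linarith [hx.1], by linarith [hx.2]⟩,
      PopSkel_of_mem_Ico_two_three ⟨by linarith [hx.1], by linarith [hx.2]⟩]
  · rw [PopSkel_of_mem_Ico_zero_two ⟨by linarith [hx.1], hx.2⟩,
      PopSkel_of_mem_Ico_two_three ⟨by linarith [hx.1], by linarith [hx.2]⟩]

end Skeleton

lemma piSkel_eq : piSkel
    = ENNReal.ofReal (1 / 4) • volume.restrict (Ico (0 : ℝ) 2)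
      + ENNReal.ofReal (1 / 2) • volume.restrict (Ico (2 : ℝ) 3) := by
  have hdensity : (fun x : ℝ => ENNReal.ofReal (if x ∈ Ico (0 : ℝ) 2 then 1 / 4
      else if x ∈ Ico (2 : ℝ) 3 then 1 / 2 else 0))
      = (Ico (0 : ℝ) 2).indicator (fun _ => ENNReal.ofReal (1 / 4))
        + (Ico (2 : ℝ) 3).indicator (fun _ => ENNReal.ofReal (1 / 2)) := by
    funext x
    by_cases h₁ : x ∈ Ico (0 : ℝ) 2
    · have h₂ : x ∉ Ico (2 : ℝ) 3 := fun h₂ => h₁.2.not_ge h₂.1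
      simp [h₁, h₂]
    · by_cases h₂ : x ∈ Ico (2 : ℝ) 3 <;> simp [h₁, h₂]
  rw [piSkel, hdensity, withDensity_add_right _ (measurable_const.indicator measurableSet_Ico),
    withDensity_indicator measurableSet_Ico, withDensity_indicator measurableSet_Ico,
    withDensity_const, withDensity_const]

lemma volume_restrict_Ico_zero_three_le :
    volume.restrict (Ico (0 : ℝ) 3) ≤ (4 : ENNReal) • piSkel := by
  have h₄ : (4 : ENNReal) * ENNReal.ofReal (1 / 4) = 1 := by
    rw [← ENNReal.ofReal_ofNat, ← ENNReal.ofReal_mul (by norm_num)]; norm_num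
  have h₂ : (4 : ENNReal) * ENNReal.ofReal (1 / 2) = 2 := by
    rw [← ENNReal.ofReal_ofNat, ← ENNReal.ofReal_mul (by norm_num)]; norm_num
  rw [piSkel_eq, smul_add, smul_smul, smul_smul, h₄, h₂, one_smul, two_smul,
    ← Ico_union_Ico_eq_Ico (zero_le_two : (0 : ℝ) ≤ 2) (by norm_num : (2 : ℝ) ≤ 3),
    Measure.restrict_union (Ico_disjoint_Ico.2 (by norm_num)) measurableSet_Ico]
  exact add_le_add le_rfl (Measure.le_add_right le_rfl)

lemma memLp_restrict_Ico_zero_three {f : ℝ → ℝ} (hf : MemLp f 2 piSkel) :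
    MemLp f 2 (volume.restrict (Ico 0 3)) :=
  (hf.smul_measure (c := 4) (by norm_num)).mono_measure volume_restrict_Ico_zero_three_le

lemma integral_piSkel {g : ℝ → ℝ} (hg : IntegrableOn g (Ico 0 3)) :
    ∫ x, g x ∂piSkel = (1 / 4) * (∫ x in Ico (0 : ℝ) 1, g x)
      + (1 / 4) * (∫ x in Ico (1 : ℝ) 2, g x) + (1 / 2) * ∫ x in Ico (2 : ℝ) 3, g x := by
  have h₀₂ : IntegrableOn g (Ico 0 2) := hg.mono_set (Ico_subset_Ico le_rfl (by norm_num))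
  have h₂₃ : IntegrableOn g (Ico 2 3) := hg.mono_set (Ico_subset_Ico (by norm_num) le_rfl)
  rw [piSkel_eq, integral_add_measure (h₀₂.smul_measure ENNReal.ofReal_ne_top)
      (h₂₃.smul_measure ENNReal.ofReal_ne_top),
    integral_smul_measure, integral_smul_measure,
    ENNReal.toReal_ofReal (by norm_num), ENNReal.toReal_ofReal (by norm_num),
    ← Ico_union_Ico_eq_Ico zero_le_one one_le_two,
    setIntegral_union (Ico_disjoint_Ico.2 (by norm_num)) measurableSet_Ico
      (h₀₂.mono_set (Ico_subset_Ico le_rfl one_le_two))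
      (h₀₂.mono_set (Ico_subset_Ico zero_le_one le_rfl))]
  simp only [smul_eq_mul]
  ring

lemma integral_piSkel_of_eqOn_const {g : ℝ → ℝ} {c₁ c₂ c₃ : ℝ}
    (h₁ : EqOn g (fun _ => c₁) (Ico 0 1)) (h₂ : EqOn g (fun _ => c₂) (Ico 1 2))
    (h₃ : EqOn g (fun _ => c₃) (Ico 2 3)) :
    ∫ x, g x ∂piSkel = (1 / 4) * c₁ + (1 / 4) * c₂ + (1 / 2) * c₃ := by
  have hg : IntegrableOn g (Ico 0 3) := by
    rw [← Ico_union_Ico_eq_Ico (zero_le_two : (0 : ℝ) ≤ 2) (by norm_num : (2 : ℝ) ≤ 3),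
      ← Ico_union_Ico_eq_Ico zero_le_one one_le_two]
    exact ((integrableOn_Ico_of_eqOn_const h₁).union (integrableOn_Ico_of_eqOn_const h₂)).union
      (integrableOn_Ico_of_eqOn_const h₃)
  rw [integral_piSkel hg, setIntegral_Ico_of_eqOn_const (by norm_num) h₁,
    setIntegral_Ico_of_eqOn_const (by norm_num) h₂, setIntegral_Ico_of_eqOn_const (by norm_num) h₃]

lemma three_step_quadratic_le {I₁ I₂ I₃ Q₁ Q₂ Q₃ m₀ m₁ m₂ : ℝ}
    (hmean : (1 / 4) * I₁ + (1 / 4) * I₂ + (1 / 2) * I₃ = 0)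
    (h₁ : I₁ ^ 2 ≤ Q₁) (h₂ : I₂ ^ 2 ≤ Q₂) (h₃ : I₃ ^ 2 ≤ Q₃)
    (hm₀ : m₀ = I₁ + I₃) (hm₁ : m₁ = I₂ + (1 / 2) * m₀) (hm₂ : m₂ = I₃ + (1 / 2) * m₁) :
    (1 / 4) * ((1 / 2) * m₀) ^ 2 + (1 / 4) * ((1 / 2) * m₁) ^ 2 + (1 / 2) * ((1 / 2) * m₂) ^ 2
      ≤ 27 / 32 * ((1 / 4) * Q₁ + (1 / 4) * Q₂ + (1 / 2) * Q₃) := by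
  -- the mean-zero condition eliminates `I₃`; what is left is a nonnegative quadratic form
  obtain rfl : I₃ = -(I₁ + I₂) / 2 := by linarith
  subst hm₂ hm₁ hm₀
  nlinarith [sq_nonneg (I₁ + I₂), sq_nonneg (I₁ - I₂)]

/-- **Example (spectral gap of the 3-skeleton).** For the chain on `[0,3)` above, the
third iterate of the transition operator satisfies
`∫ (P³f)² dπ ≤ (27/32) ∫ f² dπ` for every `f ∈ L²(π)` with `∫ f dπ = 0`; i.e. `P³` has
the `L²`-spectral gap property. -/
theorem stmt17 :
    ∀ f : ℝ → ℝ, MemLp f 2 piSkel → (∫ x, f x ∂piSkel) = 0 →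
      (∫ x, (PopSkel (PopSkel (PopSkel f)) x) ^ 2 ∂piSkel)
        ≤ (27 / 32) * ∫ x, (f x) ^ 2 ∂piSkel := by
  intro f hf hmean
  have hL2 := memLp_restrict_Ico_zero_three hf
  have hf₀₃ : IntegrableOn f (Ico 0 3) := hL2.integrable one_le_two
  have jensen : ∀ a b : ℝ, 0 ≤ a → b ≤ 3 → b = a + 1 →
      (∫ x in Ico a b, f x) ^ 2 ≤ ∫ x in Ico a b, f x ^ 2 := fun a b ha hb hab =>
    sq_setIntegral_le_setIntegral_sq (by simp [Real.volume_Ico, hab])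
      (hL2.mono_measure (Measure.restrict_mono (Ico_subset_Ico ha hb) le_rfl))
  have hm₂ : regenIntegral (PopSkel (PopSkel f))
      = (∫ x in Ico (2 : ℝ) 3, f x) + (1 / 2) * regenIntegral (PopSkel f) := by
    rw [regenIntegral_PopSkel (integrableOn_PopSkel hf₀₃),
      setIntegral_Ico_PopSkel zero_le_one le_rfl]
    norm_num
  obtain ⟨h₁, h₂, h₃⟩ := PopSkel_cube_eqOn (f := f)
  rw [integral_piSkel hf₀₃] at hmean
  rw [integral_piSkel_of_eqOn_const (g := fun x => PopSkel (PopSkel (PopSkel f)) x ^ 2)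
      (fun x hx => congrArg (· ^ 2) (h₁ hx)) (fun x hx => congrArg (· ^ 2) (h₂ hx))
      (fun x hx => congrArg (· ^ 2) (h₃ hx)),
    integral_piSkel hL2.integrable_sq]
  exact three_step_quadratic_le hmean (jensen 0 1 le_rfl (by norm_num) (by norm_num))
    (jensen 1 2 zero_le_one (by norm_num) (by norm_num))
    (jensen 2 3 zero_le_two le_rfl (by norm_num)) (regenIntegral_eq_add hf₀₃)
    (regenIntegral_PopSkel hf₀₃) hm₂
end
end
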